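/- arXiv:2302.12495 — 3 statements merged into one kernel-verified Lean document; each statement's English description precedes it below -/
import Mathlib

section
/- Let Ω ⊂ ℝ² be a bounded open set, T > 0, and let u ∈ C([0,T];L²(Ω)) be extended by zero outside Q_T = (0,T)×Ω. Then the texture index p_u is Lipschitz continuous on the closure of Q_T: there exists a constant C > 0, depending only on Ω, G_σ, h, a, and ‖u‖_{C([0,T];L²(Ω))}, such that |p_u(t,x) − p_u(s,y)| ≤ C( |x−y| + |t−s| ) for all (t,x), (s,y) in the closure of Q_T. -/
open MeasureTheory Real Set Filter
open scoped ENNReal Topology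

noncomputable section

local notation "E2" => EuclideanSpace ℝ (Fin 2)

/-- The two-dimensional Gaussian of width `σ`. -/
def gaussian (σ : ℝ) (x : E2) : ℝ :=
  (2 * π * σ ^ 2)⁻¹ * Real.exp (-‖x‖ ^ 2 / (2 * σ ^ 2))

/-- The Cauchy edge-stopping function `g(s) = a/(a+s)`. -/
def edgeStop (a s : ℝ) : ℝ := a / (a + s)

/-- Spatial convolution `(∇G_σ ∗ u(τ,·))(x)` over `ℝ²`. -/
def gradConv (σ : ℝ) (u : ℝ → E2 → ℝ) (τ : ℝ) (x : E2) : E2 :=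
  ∫ y : E2, u τ y • gradient (gaussian σ) (x - y)

/-- The texture index `p_u(t,x) = 1 + g( (1/h) ∫_{t−h}^{t} |(∇G_σ ∗ ũ(τ,·))(x)|² dτ )`. -/
def textureIndex (σ a h : ℝ) (u : ℝ → E2 → ℝ) (t : ℝ) (x : E2) : ℝ :=
  1 + edgeStop a ((1 / h) * ∫ τ in (t - h)..t, ‖gradConv σ u τ x‖ ^ 2)

/-!
The kernel `∇G_σ` is bounded and globally Lipschitz, and the `L¹` norms of the slices `u(τ)` are
bounded uniformly in `τ`: continuity into `L²` on the compact `[0,T]` bounds `‖u(τ)‖₂`, and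
Hölder's inequality on the bounded support turns this into an `L¹` bound. Hence `∇G_σ ∗ u(τ)` is
bounded and Lipschitz in `x`, uniformly in `τ`. Its window energy is then Lipschitz in `x`
(difference of squares) and in `t` (moving `t` only moves the ends of the window), and
`g(s) = a/(a+s)` is `1/a`-Lipschitz on `[0, ∞)`.
-/

theorem Real.exp_neg_mul_one_add_two_mul_le_two (t : ℝ) :
    Real.exp (-t) * (1 + 2 * t) ≤ 2 := by
  rw [Real.exp_neg, inv_mul_le_iff₀ (Real.exp_pos t)]
  nlinarith [Real.add_one_le_exp t]

section Gaussian

variable {σ : ℝ}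

theorem gaussian_nonneg (σ : ℝ) (x : E2) : 0 ≤ gaussian σ x := by
  unfold gaussian; positivity

theorem gaussian_mul_one_add_sq_div_le (σ : ℝ) (x : E2) :
    gaussian σ x * (1 + ‖x‖ ^ 2 / σ ^ 2) ≤ 2 * (2 * π * σ ^ 2)⁻¹ := by
  have hexp := Real.exp_neg_mul_one_add_two_mul_le_two (‖x‖ ^ 2 / (2 * σ ^ 2))
  calc gaussian σ x * (1 + ‖x‖ ^ 2 / σ ^ 2)
      = (2 * π * σ ^ 2)⁻¹ * (Real.exp (-(‖x‖ ^ 2 / (2 * σ ^ 2))) *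
          (1 + 2 * (‖x‖ ^ 2 / (2 * σ ^ 2)))) := by
        rw [gaussian, neg_div, ← mul_div_mul_left (‖x‖ ^ 2) (σ ^ 2) (two_ne_zero' ℝ)]; ring
    _ ≤ (2 * π * σ ^ 2)⁻¹ * 2 := by gcongr
    _ = 2 * (2 * π * σ ^ 2)⁻¹ := mul_comm _ _

theorem hasFDerivAt_gaussian (σ : ℝ) (x : E2) :
    HasFDerivAt (gaussian σ) ((-(σ ^ 2)⁻¹ * gaussian σ x) • innerSL ℝ x) x := by
  have h := ((((hasStrictFDerivAt_norm_sq x).hasFDerivAt.const_mul (-(2 * σ ^ 2)⁻¹)).exp).const_mul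
    (2 * π * σ ^ 2)⁻¹)
  refine (h.congr_fderiv ?_).congr_of_eventuallyEq (.of_forall fun y => ?_)
  · ext v
    simp only [gaussian, _root_.smul_apply, coe_innerSL_apply, nsmul_eq_mul, smul_eq_mul]
    ring_nf
  · simp only [gaussian]
    ring_nf

theorem gradient_gaussian (σ : ℝ) :
    gradient (gaussian σ) = fun x => (-(σ ^ 2)⁻¹ * gaussian σ x) • x := by
  ext1 x
  refine (hasGradientAt_iff_hasFDerivAt.mpr ((hasFDerivAt_gaussian σ x).congr_fderiv ?_)).gradient
  ext v
  simp [InnerProductSpace.toDual_apply_apply]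

theorem differentiable_gradient_gaussian (σ : ℝ) :
    Differentiable ℝ (gradient (gaussian σ)) := by
  rw [gradient_gaussian]
  exact fun x => (((hasFDerivAt_gaussian σ x).const_mul _).smul (hasFDerivAt_id x)).differentiableAt

theorem norm_gradient_gaussian_le (hσ : 0 < σ) (x : E2) :
    ‖gradient (gaussian σ) x‖ ≤ (2 * π * σ ^ 2)⁻¹ / σ := by
  have hG := gaussian_nonneg σ x
  have hamgm : ‖x‖ ≤ σ / 2 * (1 + ‖x‖ ^ 2 / σ ^ 2) := by
    rw [← sub_nonneg]
    have hsq : σ / 2 * (1 + ‖x‖ ^ 2 / σ ^ 2) - ‖x‖ = (σ - ‖x‖) ^ 2 / (2 * σ) := by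
      field_simp; ring
    rw [hsq]; positivity
  calc ‖gradient (gaussian σ) x‖ = (σ ^ 2)⁻¹ * gaussian σ x * ‖x‖ := by
        simp [gradient_gaussian, norm_smul, abs_of_nonneg hG]
    _ ≤ (σ ^ 2)⁻¹ * gaussian σ x * (σ / 2 * (1 + ‖x‖ ^ 2 / σ ^ 2)) := by gcongr
    _ = σ / (2 * σ ^ 2) * (gaussian σ x * (1 + ‖x‖ ^ 2 / σ ^ 2)) := by ring
    _ ≤ σ / (2 * σ ^ 2) * (2 * (2 * π * σ ^ 2)⁻¹) :=
        mul_le_mul_of_nonneg_left (gaussian_mul_one_add_sq_div_le σ x) (by positivity)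
    _ = (2 * π * σ ^ 2)⁻¹ / σ := by field_simp

theorem norm_fderiv_gradient_gaussian_le (σ : ℝ) (x : E2) :
    ‖fderiv ℝ (gradient (gaussian σ)) x‖ ≤ 2 * (2 * π * σ ^ 2)⁻¹ / σ ^ 2 := by
  have hD : HasFDerivAt (fun y : E2 => (-(σ ^ 2)⁻¹ * gaussian σ y) • y) _ x :=
    ((hasFDerivAt_gaussian σ x).const_mul (-(σ ^ 2)⁻¹)).smul (hasFDerivAt_id x)
  rw [gradient_gaussian, hD.fderiv]
  have hG := gaussian_nonneg σ x
  calc _ ≤ (σ ^ 2)⁻¹ * gaussian σ x * 1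
          + (σ ^ 2)⁻¹ * ((σ ^ 2)⁻¹ * gaussian σ x * ‖x‖) * ‖x‖ := by
        refine (norm_add_le _ _).trans (add_le_add ?_ ?_)
        · rw [norm_smul]
          gcongr
          · simp [abs_of_nonneg hG]
          · exact ContinuousLinearMap.norm_id_le
        · rw [ContinuousLinearMap.norm_smulRight_apply, norm_smul, norm_smul, innerSL_apply_norm]
          simp [abs_of_nonneg hG]
    _ = (σ ^ 2)⁻¹ * (gaussian σ x * (1 + ‖x‖ ^ 2 / σ ^ 2)) := by ring
    _ ≤ (σ ^ 2)⁻¹ * (2 * (2 * π * σ ^ 2)⁻¹) :=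
        mul_le_mul_of_nonneg_left (gaussian_mul_one_add_sq_div_le σ x) (by positivity)
    _ = 2 * (2 * π * σ ^ 2)⁻¹ / σ ^ 2 := by ring

theorem norm_gradient_gaussian_sub_le (σ : ℝ) (x y : E2) :
    ‖gradient (gaussian σ) x - gradient (gaussian σ) y‖
      ≤ 2 * (2 * π * σ ^ 2)⁻¹ / σ ^ 2 * ‖x - y‖ :=
  convex_univ.norm_image_sub_le_of_norm_fderiv_le
    (fun _ _ => (differentiable_gradient_gaussian σ).differentiableAt)
    (fun z _ => norm_fderiv_gradient_gaussian_le σ z) (mem_univ y) (mem_univ x)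

end Gaussian

section Convolution

variable {E F : Type*} [NormedAddCommGroup E] [MeasurableSpace E] [NormedAddCommGroup F]
  [NormedSpace ℝ F] {μ : Measure E} {f : E → ℝ} {Φ : E → F} {K L : ℝ}

theorem norm_integral_smul_comp_sub_le (hf : Integrable f μ) (hΦ : ∀ z, ‖Φ z‖ ≤ K) (x : E) :
    ‖∫ y, f y • Φ (x - y) ∂μ‖ ≤ (∫ y, |f y| ∂μ) * K := by
  rw [← integral_mul_const]
  refine norm_integral_le_of_norm_le (hf.abs.mul_const K) (.of_forall fun y => ?_)
  rw [norm_smul, Real.norm_eq_abs]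
  exact mul_le_mul_of_nonneg_left (hΦ _) (abs_nonneg _)

variable [BorelSpace E] [SecondCountableTopology E]

theorem integrable_smul_comp_sub (hf : Integrable f μ) (hΦc : Continuous Φ)
    (hΦ : ∀ z, ‖Φ z‖ ≤ K) (x : E) : Integrable (fun y => f y • Φ (x - y)) μ :=
  hf.smul_bdd K (hΦc.comp (continuous_sub_left x)).aestronglyMeasurable (.of_forall fun _ => hΦ _)

theorem norm_integral_smul_comp_sub_sub_le (hf : Integrable f μ) (hΦc : Continuous Φ)
    (hΦ : ∀ z, ‖Φ z‖ ≤ K) (hΦL : ∀ z w, ‖Φ z - Φ w‖ ≤ L * ‖z - w‖) (x x' : E) :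
    ‖∫ y, f y • Φ (x - y) ∂μ - ∫ y, f y • Φ (x' - y) ∂μ‖ ≤ (∫ y, |f y| ∂μ) * L * ‖x - x'‖ := by
  rw [← integral_sub (integrable_smul_comp_sub hf hΦc hΦ x) (integrable_smul_comp_sub hf hΦc hΦ x'),
    mul_assoc, ← integral_mul_const]
  refine norm_integral_le_of_norm_le (hf.abs.mul_const _) (.of_forall fun y => ?_)
  rw [← smul_sub, norm_smul, Real.norm_eq_abs]
  refine mul_le_mul_of_nonneg_left ?_ (abs_nonneg _)
  simpa only [sub_sub_sub_cancel_right] using hΦL (x - y) (x' - y)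

theorem stronglyMeasurable_integral_smul_comp_sub {X : Type*} [MeasurableSpace X] [SFinite μ]
    {u : X → E → ℝ} (hu : Measurable (Function.uncurry u)) (hΦc : Continuous Φ) (x : E) :
    StronglyMeasurable fun τ => ∫ y, u τ y • Φ (x - y) ∂μ :=
  StronglyMeasurable.integral_prod_right' (f := fun p : X × E => u p.1 p.2 • Φ (x - p.2))
    (hu.stronglyMeasurable.smul
      ((hΦc.comp (continuous_sub_left x)).stronglyMeasurable.comp_measurable measurable_snd))

end Convolution

theorem integral_abs_le_norm_toLp_mul_rpow {α : Type*} [MeasurableSpace α] {μ : Measure α}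
    {f : α → ℝ} (hf : MemLp f 2 μ) {s : Set α} (hs : μ s ≠ ∞) (hfs : ∀ x ∉ s, f x = 0) :
    ∫ x, |f x| ∂μ ≤ ‖hf.toLp f‖ * μ.real s ^ (1 / 2 : ℝ) := by
  have hsupp : Function.support f ⊆ s := fun x hx => by_contra fun hxs => hx (hfs x hxs)
  have hHolder := eLpNorm_le_eLpNorm_mul_rpow_measure_univ (μ := μ.restrict s) one_le_two
    hf.aestronglyMeasurable.restrict
  rw [eLpNorm_restrict_eq_of_support_subset hsupp, eLpNorm_restrict_eq_of_support_subset hsupp,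
    Measure.restrict_apply_univ] at hHolder
  norm_num at hHolder
  calc ∫ x, |f x| ∂μ = (eLpNorm f 1 μ).toReal := by
        simp_rw [← Real.norm_eq_abs]
        rw [integral_norm_eq_lintegral_enorm hf.aestronglyMeasurable, eLpNorm_one_eq_lintegral_enorm]
    _ ≤ (eLpNorm f 2 μ * μ s ^ (1 / 2 : ℝ)).toReal :=
        ENNReal.toReal_mono (ENNReal.mul_ne_top hf.eLpNorm_ne_top (by simp [hs])) hHolder
    _ = ‖hf.toLp f‖ * μ.real s ^ (1 / 2 : ℝ) := by
        rw [ENNReal.toReal_mul, ← ENNReal.toReal_rpow, Lp.norm_toLp, measureReal_def]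

theorem exists_forall_norm_toLp_le_of_isCompact {X α F : Type*} [TopologicalSpace X]
    [MeasurableSpace α] [NormedAddCommGroup F] {μ : Measure α} {p : ℝ≥0∞} [Fact (1 ≤ p)]
    {K : Set X} (hK : IsCompact K) {u : X → α → F} (hu : ∀ t, MemLp (u t) p μ)
    (hcont : ContinuousOn (fun t => (hu t).toLp (u t)) K) (hzero : ∀ t ∉ K, u t = 0) :
    ∃ M, ∀ t, ‖(hu t).toLp (u t)‖ ≤ M := by
  obtain ⟨M, hM⟩ := hK.exists_bound_of_continuousOn hcont
  refine ⟨max M 0, fun t => ?_⟩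
  by_cases ht : t ∈ K
  · exact (hM t ht).trans (le_max_left _ _)
  · rw [Lp.norm_toLp, hzero t ht, eLpNorm_zero, ENNReal.toReal_zero]
    exact le_max_right _ _

theorem abs_edgeStop_sub_le {a s₁ s₂ : ℝ} (ha : 0 < a) (h₁ : 0 ≤ s₁) (h₂ : 0 ≤ s₂) :
    |edgeStop a s₁ - edgeStop a s₂| ≤ |s₁ - s₂| / a := by
  have hd₁ : 0 < a + s₁ := by linarith
  have hd₂ : 0 < a + s₂ := by linarith
  have hdiff : edgeStop a s₁ - edgeStop a s₂ = a * (s₂ - s₁) / ((a + s₁) * (a + s₂)) := by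
    unfold edgeStop; field_simp; ring
  rw [hdiff, abs_div, abs_mul, abs_of_pos ha, abs_of_pos (mul_pos hd₁ hd₂), abs_sub_comm,
    div_le_div_iff₀ (mul_pos hd₁ hd₂) ha]
  nlinarith [mul_nonneg (abs_nonneg (s₁ - s₂)) (by positivity : 0 ≤ a * s₁ + a * s₂ + s₁ * s₂)]

theorem norm_integral_window_sub_le {E : Type*} [NormedAddCommGroup E] [NormedSpace ℝ E]
    {q : ℝ → E} {C : ℝ} (hq : ∀ c d, IntervalIntegrable q volume c d) (hC : ∀ τ, ‖q τ‖ ≤ C)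
    (h t s : ℝ) :
    ‖(∫ τ in (t - h)..t, q τ) - ∫ τ in (s - h)..s, q τ‖ ≤ 2 * C * |t - s| := by
  rw [intervalIntegral.integral_interval_sub_interval_comm (hq _ _) (hq _ _) (hq _ _)]
  have hbound : ∀ c d, ‖∫ τ in c..d, q τ‖ ≤ C * |d - c| := fun c d =>
    intervalIntegral.norm_integral_le_of_norm_le_const fun τ _ => hC τ
  calc _ ≤ ‖∫ τ in (t - h)..(s - h), q τ‖ + ‖∫ τ in t..s, q τ‖ := norm_sub_le _ _
    _ ≤ C * |s - h - (t - h)| + C * |s - t| := add_le_add (hbound _ _) (hbound _ _)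
    _ = 2 * C * |t - s| := by rw [sub_sub_sub_cancel_right, abs_sub_comm]; ring

section WindowEnergy

variable {α F : Type*} [NormedAddCommGroup F] {h B : ℝ} {v : ℝ → α → F}

def windowEnergy (h : ℝ) (v : ℝ → α → F) (t : ℝ) (x : α) : ℝ :=
  (1 / h) * ∫ τ in (t - h)..t, ‖v τ x‖ ^ 2

theorem windowEnergy_nonneg (hh : 0 ≤ h) (t : ℝ) (x : α) : 0 ≤ windowEnergy h v t x :=
  mul_nonneg (by positivity)
    (intervalIntegral.integral_nonneg (by linarith) fun _ _ => by positivity)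

theorem intervalIntegrable_norm_sq {x : α} (hv : AEStronglyMeasurable (fun τ => v τ x))
    (hB : ∀ τ, ‖v τ x‖ ≤ B) (c d : ℝ) :
    IntervalIntegrable (fun τ => ‖v τ x‖ ^ 2) volume c d :=
  (intervalIntegrable_const (c := B ^ 2)).mono_fun' (hv.norm.pow 2).restrict
    (.of_forall fun τ => show ‖‖v τ x‖ ^ 2‖ ≤ B ^ 2 by
      rw [norm_pow, norm_norm]; exact pow_le_pow_left₀ (norm_nonneg _) (hB τ) 2)

theorem abs_windowEnergy_sub_left_le (hh : 0 < h) {x : α}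
    (hv : AEStronglyMeasurable (fun τ => v τ x)) (hB : ∀ τ, ‖v τ x‖ ≤ B) (t s : ℝ) :
    |windowEnergy h v t x - windowEnergy h v s x| ≤ 2 * B ^ 2 / h * |t - s| := by
  have hq : ∀ τ, ‖‖v τ x‖ ^ 2‖ ≤ B ^ 2 := fun τ => by
    rw [norm_pow, norm_norm]; exact pow_le_pow_left₀ (norm_nonneg _) (hB τ) 2
  rw [windowEnergy, windowEnergy, ← mul_sub, abs_mul, abs_of_pos (one_div_pos.mpr hh)]
  calc 1 / h * |_| ≤ 1 / h * (2 * B ^ 2 * |t - s|) := by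
        gcongr; exact norm_integral_window_sub_le (intervalIntegrable_norm_sq hv hB) hq h t s
    _ = 2 * B ^ 2 / h * |t - s| := by ring

theorem abs_windowEnergy_sub_right_le (hh : 0 < h) {x y : α} {δ : ℝ}
    (hvx : AEStronglyMeasurable (fun τ => v τ x)) (hvy : AEStronglyMeasurable (fun τ => v τ y))
    (hBx : ∀ τ, ‖v τ x‖ ≤ B) (hBy : ∀ τ, ‖v τ y‖ ≤ B) (hδ : ∀ τ, ‖v τ x - v τ y‖ ≤ δ) (t : ℝ) :
    |windowEnergy h v t x - windowEnergy h v t y| ≤ 2 * B * δ := by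
  have hq : ∀ τ, ‖‖v τ x‖ ^ 2 - ‖v τ y‖ ^ 2‖ ≤ 2 * B * δ := fun τ => by
    rw [Real.norm_eq_abs, sq_sub_sq, abs_mul, abs_of_nonneg (by positivity)]
    exact mul_le_mul (by linarith [hBx τ, hBy τ]) ((abs_norm_sub_norm_le _ _).trans (hδ τ))
      (abs_nonneg _) (by linarith [norm_nonneg (v τ x), hBx τ])
  rw [windowEnergy, windowEnergy, ← mul_sub, ← intervalIntegral.integral_sub
    (intervalIntegrable_norm_sq hvx hBx _ _) (intervalIntegrable_norm_sq hvy hBy _ _), abs_mul,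
    abs_of_pos (one_div_pos.mpr hh)]
  calc 1 / h * |_| ≤ 1 / h * (2 * B * δ * |t - (t - h)|) := by
        gcongr; exact intervalIntegral.norm_integral_le_of_norm_le_const fun τ _ => hq τ
    _ = 2 * B * δ := by rw [sub_sub_cancel, abs_of_pos hh]; field_simp

end WindowEnergy

section GradConv

variable {σ : ℝ} {u : ℝ → E2 → ℝ}

theorem norm_gradConv_le (hσ : 0 < σ) {τ : ℝ} (hu : Integrable (u τ)) (x : E2) :
    ‖gradConv σ u τ x‖ ≤ (∫ y, |u τ y|) * ((2 * π * σ ^ 2)⁻¹ / σ) :=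
  norm_integral_smul_comp_sub_le hu (norm_gradient_gaussian_le hσ) x

theorem norm_gradConv_sub_le (hσ : 0 < σ) {τ : ℝ} (hu : Integrable (u τ)) (x y : E2) :
    ‖gradConv σ u τ x - gradConv σ u τ y‖
      ≤ (∫ z, |u τ z|) * (2 * (2 * π * σ ^ 2)⁻¹ / σ ^ 2) * ‖x - y‖ :=
  norm_integral_smul_comp_sub_sub_le hu (differentiable_gradient_gaussian σ).continuous
    (norm_gradient_gaussian_le hσ) (norm_gradient_gaussian_sub_le σ) x y

theorem stronglyMeasurable_gradConv (hu : Measurable (Function.uncurry u)) (x : E2) :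
    StronglyMeasurable fun τ => gradConv σ u τ x :=
  stronglyMeasurable_integral_smul_comp_sub hu (differentiable_gradient_gaussian σ).continuous x

end GradConv

theorem abs_textureIndex_sub_le {σ a h B L : ℝ} {u : ℝ → E2 → ℝ} (ha : 0 < a) (hh : 0 < h)
    (hu : Measurable (Function.uncurry u)) (hB : ∀ τ x, ‖gradConv σ u τ x‖ ≤ B)
    (hL : ∀ τ x y, ‖gradConv σ u τ x - gradConv σ u τ y‖ ≤ L * ‖x - y‖) (t s : ℝ) (x y : E2) :
    |textureIndex σ a h u t x - textureIndex σ a h u s y|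
      ≤ (2 * B * L * ‖x - y‖ + 2 * B ^ 2 / h * |t - s|) / a := by
  have hmeas : ∀ z, AEStronglyMeasurable (fun τ => gradConv σ u τ z) := fun z =>
    (stronglyMeasurable_gradConv hu z).aestronglyMeasurable
  have hE := fun τ z => windowEnergy_nonneg (v := gradConv σ u) hh.le τ z
  change |(1 + edgeStop a (windowEnergy h (gradConv σ u) t x))
    - (1 + edgeStop a (windowEnergy h (gradConv σ u) s y))| ≤ _
  rw [add_sub_add_left_eq_sub]
  refine (abs_edgeStop_sub_le ha (hE t x) (hE s y)).trans (div_le_div_of_nonneg_right ?_ ha.le)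
  calc _ ≤ |windowEnergy h (gradConv σ u) t x - windowEnergy h (gradConv σ u) t y|
        + |windowEnergy h (gradConv σ u) t y - windowEnergy h (gradConv σ u) s y| := abs_sub_le _ _ _
    _ ≤ 2 * B * (L * ‖x - y‖) + 2 * B ^ 2 / h * |t - s| :=
        add_le_add (abs_windowEnergy_sub_right_le hh (hmeas x) (hmeas y) (hB · x) (hB · y)
          (hL · x y) t) (abs_windowEnergy_sub_left_le hh (hmeas y) (hB · y) t s)
    _ = 2 * B * L * ‖x - y‖ + 2 * B ^ 2 / h * |t - s| := by ring

theorem statement1_general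
    (Ω : Set E2) (hΩ_bdd : Bornology.IsBounded Ω)
    (T : ℝ) (σ a h : ℝ) (hσ : 0 < σ) (ha : 0 < a) (hh : 0 < h)
    (u : ℝ → E2 → ℝ)
    (hu_meas : Measurable (Function.uncurry u))
    (hu_zero : ∀ t x, t ∉ Ioo 0 T ∨ x ∉ Ω → u t x = 0)
    (hu_mem : ∀ t, MemLp (u t) 2 volume)
    (hu_cont : ContinuousOn (fun t => (hu_mem t).toLp (u t)) (Icc 0 T)) :
    ∃ C > (0 : ℝ), ∀ t ∈ Icc 0 T, ∀ x ∈ closure Ω, ∀ s ∈ Icc 0 T, ∀ y ∈ closure Ω,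
      |textureIndex σ a h u t x - textureIndex σ a h u s y| ≤
        C * (‖x - y‖ + |t - s|) := by
  have hsupp : ∀ τ y, y ∉ closure Ω → u τ y = 0 := fun τ y hy =>
    hu_zero τ y (.inr fun hyΩ => hy (subset_closure hyΩ))
  have hfin : volume (closure Ω) ≠ ∞ := hΩ_bdd.closure.measure_lt_top.ne
  obtain ⟨M, hM⟩ := exists_forall_norm_toLp_le_of_isCompact isCompact_Icc hu_mem hu_cont
    fun t ht => funext fun y => hu_zero t y (.inl fun ht' => ht (Ioo_subset_Icc_self ht'))
  set M₁ := M * volume.real (closure Ω) ^ (1 / 2 : ℝ)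
  have hM₁ : 0 ≤ M₁ := mul_nonneg ((norm_nonneg _).trans (hM 0)) (by positivity)
  have hint : ∀ τ, Integrable (u τ) := fun τ => memLp_one_iff_integrable.mp
    ((hu_mem τ).mono_exponent_of_measure_support_ne_top (hsupp τ) hfin one_le_two)
  have hL1 : ∀ τ, ∫ y, |u τ y| ≤ M₁ := fun τ =>
    (integral_abs_le_norm_toLp_mul_rpow (hu_mem τ) hfin (hsupp τ)).trans
      (mul_le_mul_of_nonneg_right (hM τ) (by positivity))
  set B := M₁ * ((2 * π * σ ^ 2)⁻¹ / σ)
  set L := M₁ * (2 * (2 * π * σ ^ 2)⁻¹ / σ ^ 2)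
  have hB : ∀ τ x, ‖gradConv σ u τ x‖ ≤ B := fun τ x =>
    (norm_gradConv_le hσ (hint τ) x).trans (mul_le_mul_of_nonneg_right (hL1 τ) (by positivity))
  have hL : ∀ τ x y, ‖gradConv σ u τ x - gradConv σ u τ y‖ ≤ L * ‖x - y‖ := fun τ x y =>
    (norm_gradConv_sub_le hσ (hint τ) x y).trans
      (by gcongr; exact mul_le_mul_of_nonneg_right (hL1 τ) (by positivity))
  refine ⟨(2 * B * L + 2 * B ^ 2 / h) / a + 1, by positivity, fun t _ x _ s _ y _ => ?_⟩
  refine (abs_textureIndex_sub_le ha hh hu_meas hB hL t s x y).trans ?_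
  have hxy := norm_nonneg (x - y)
  have hts := abs_nonneg (t - s)
  calc _ ≤ (2 * B * L + 2 * B ^ 2 / h) / a * (‖x - y‖ + |t - s|) := by
        rw [div_mul_eq_mul_div (2 * B * L + 2 * B ^ 2 / h) a]
        refine div_le_div_of_nonneg_right ?_ ha.le
        nlinarith [mul_nonneg (by positivity : 0 ≤ 2 * B * L) hts,
          mul_nonneg (by positivity : 0 ≤ 2 * B ^ 2 / h) hxy]
    _ ≤ _ := by gcongr; linarith

/-- For `u ∈ C([0,T];L²(Ω))` extended by zero outside `Q_T = (0,T)×Ω`, the texture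
index `p_u` is Lipschitz continuous on the closure of `Q_T`, with a constant depending
only on the data. -/
theorem statement1
    (Ω : Set E2) (hΩ_open : IsOpen Ω) (hΩ_bdd : Bornology.IsBounded Ω)
    (T : ℝ) (hT : 0 < T) (σ a h : ℝ) (hσ : 0 < σ) (ha : 0 < a) (hh : 0 < h)
    (u : ℝ → E2 → ℝ)
    (hu_meas : Measurable (Function.uncurry u))
    (hu_zero : ∀ t x, t ∉ Ioo 0 T ∨ x ∉ Ω → u t x = 0)
    (hu_mem : ∀ t, MemLp (u t) 2 volume)
    (hu_cont : ContinuousOn (fun t => (hu_mem t).toLp (u t)) (Icc 0 T)) :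
    ∃ C > (0 : ℝ), ∀ t ∈ Icc 0 T, ∀ x ∈ closure Ω, ∀ s ∈ Icc 0 T, ∀ y ∈ closure Ω,
      |textureIndex σ a h u t x - textureIndex σ a h u s y| ≤
        C * (‖x - y‖ + |t - s|) :=
  statement1_general Ω hΩ_bdd T σ a h hσ ha hh u hu_meas hu_zero hu_mem hu_cont
end
end

section
/- Let Ω ⊂ ℝ^N be a bounded open set, δ ∈ (0,1], and let p_k, p ∈ C^{0,δ}(cl Ω) for k = 1, 2, … with p_k → p uniformly on cl Ω and 1 < α ≤ p_k(x) ≤ β < ∞ for all k and all x ∈ Ω. Let {f_k} be a sequence of measurable functions with limsup_{k→∞} ∫_Ω |f_k(x)|^{p_k(x)} dx < ∞, and suppose f_k converges weakly in L^α(Ω) to f, i.e., ∫_Ω f_k g dx → ∫_Ω f g dx for every g ∈ L^{α/(α−1)}(Ω). Then ∫_Ω |f(x)|^{p(x)} dx < ∞ and liminf_{k→∞} ∫_Ω |f_k(x)|^{p_k(x)} dx ≥ ∫_Ω |f(x)|^{p(x)} dx. -/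
open MeasureTheory Real Set Filter
open scoped ENNReal Topology

noncomputable section

/-!
For a fixed exponent `q` with `1 < q ≤ β`, the modular `∫ |F|^q` is weakly lower
semicontinuous. At a bounded truncation `u` of `F`, the tangent-line inequality
`|u|^q + q |u|^(q-2) u (a - u) ≤ |a|^q` gives an affine minorant of the modular whose linear
part is integration against a bounded function, so it passes to the weak limit. Fatou's lemma
then removes the truncation.

For the moving exponents, uniform convergence gives `p - ε ≤ p_k ≤ p + ε` for large `k`, and
`t^(p-ε) ≤ t^(p_k) + (p_k - p + ε)` bounds the `(p - ε)`-modular of `f_k` by its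
`p_k`-modular plus `2ε |Ω|`. Letting `ε → 0`, Fatou's lemma once more gives the claim.
-/

theorem ConvexOn.add_mul_sub_le_of_hasDerivAt {S : Set ℝ} {f : ℝ → ℝ} {f' x y : ℝ}
    (hf : ConvexOn ℝ S f) (hx : x ∈ S) (hy : y ∈ S) (hd : HasDerivAt f f' x) :
    f x + f' * (y - x) ≤ f y := by
  rcases lt_trichotomy x y with hxy | rfl | hyx
  · have := hf.le_slope_of_hasDerivAt hx hy hxy hd
    rw [slope_def_field, le_div_iff₀ (sub_pos.mpr hxy)] at this
    linarith
  · simp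
  · have := hf.slope_le_of_hasDerivAt hy hx hyx hd
    rw [slope_def_field, div_le_iff₀ (sub_pos.mpr hyx)] at this
    linarith

theorem convexOn_abs_rpow {q : ℝ} (hq : 1 ≤ q) : ConvexOn ℝ univ fun x : ℝ => |x| ^ q := by
  refine ⟨convex_univ, fun x _ y _ a b ha hb hab => ?_⟩
  calc |a • x + b • y| ^ q ≤ (a • |x| + b • |y|) ^ q := by
        refine rpow_le_rpow (abs_nonneg _) ?_ (by linarith)
        simpa [abs_mul, abs_of_nonneg ha, abs_of_nonneg hb] using abs_add_le (a * x) (b * y)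
    _ ≤ a • |x| ^ q + b • |y| ^ q :=
        (convexOn_rpow hq).2 (abs_nonneg x) (abs_nonneg y) ha hb hab

theorem abs_rpow_add_mul_sub_le {q a b : ℝ} (hq : 1 < q) :
    |b| ^ q + q * |b| ^ (q - 2) * b * (a - b) ≤ |a| ^ q :=
  (convexOn_abs_rpow hq.le).add_mul_sub_le_of_hasDerivAt trivial trivial
    (hasDerivAt_abs_rpow b hq)

theorem rpow_le_rpow_add_sub {t q r : ℝ} (ht : 0 ≤ t) (hq : 1 ≤ q) (hqr : q ≤ r) :
    t ^ q ≤ t ^ r + (r - q) := by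
  rcases ht.eq_or_lt with rfl | ht
  · rw [zero_rpow (by linarith), zero_rpow (by linarith)]
    linarith
  rcases le_or_gt 1 t with h1 | h1
  · linarith [rpow_le_rpow_of_exponent_le h1 hqr]
  have hexp : 1 - t ^ (r - q) ≤ (r - q) * -log t := by
    rw [rpow_def_of_pos ht, mul_comm]
    linarith [add_one_le_exp ((r - q) * log t)]
  have hlog : t * -log t ≤ 1 := by
    have := log_le_sub_one_of_pos (inv_pos.mpr ht)
    rw [log_inv] at this
    nlinarith [mul_inv_cancel₀ ht.ne']
  have htq : t ^ q ≤ t := by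
    simpa using rpow_le_rpow_of_exponent_ge ht h1.le hq
  have hsplit : t ^ r = t ^ q * t ^ (r - q) := by
    rw [← rpow_add ht]; ring_nf
  have hrq : t ^ (r - q) ≤ 1 := rpow_le_one ht.le h1.le (by linarith)
  nlinarith [mul_le_mul_of_nonneg_right htq (by linarith : (0:ℝ) ≤ 1 - t ^ (r - q)),
    mul_le_mul_of_nonneg_left hlog (by linarith : (0:ℝ) ≤ r - q), rpow_nonneg ht.le q]

theorem rpow_le_max_one_rpow {t M e β : ℝ} (ht : 0 ≤ t) (htM : t ≤ M) (he : 0 ≤ e)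
    (heβ : e ≤ β) : t ^ e ≤ max 1 M ^ β :=
  (rpow_le_rpow ht (htM.trans (le_max_right _ _)) he).trans
    (rpow_le_rpow_of_exponent_le (le_max_left _ _) heβ)

theorem abs_mul_abs_rpow_sub_two_mul_le {q β t M : ℝ} (hq : 1 < q) (hqβ : q ≤ β)
    (ht : |t| ≤ M) : |q * |t| ^ (q - 2) * t| ≤ β * max 1 M ^ β := by
  have hsplit : |t| ^ (q - 1) = |t| ^ (q - 2) * |t| := by
    rw [← rpow_add_one' (abs_nonneg _) (by linarith)]
    ring_nf
  rw [abs_mul, abs_mul, abs_of_pos (by linarith : 0 < q),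
    abs_of_nonneg (rpow_nonneg (abs_nonneg _) _), mul_assoc, ← hsplit]
  exact mul_le_mul hqβ (rpow_le_max_one_rpow (abs_nonneg _) ht (by linarith) (by linarith))
    (rpow_nonneg (abs_nonneg _) _) (by linarith)

theorem continuousOn_of_abs_sub_le_mul_rpow {E : Type*} [SeminormedAddCommGroup E]
    {f : E → ℝ} {s : Set E} {C δ : ℝ} (hδ : 0 < δ)
    (hf : ∀ x ∈ s, ∀ y ∈ s, |f x - f y| ≤ C * ‖x - y‖ ^ δ) : ContinuousOn f s := by
  intro x hx
  rw [ContinuousWithinAt, tendsto_iff_norm_sub_tendsto_zero]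
  have hbound : Tendsto (fun y => C * ‖y - x‖ ^ δ) (𝓝[s] x) (𝓝 (C * ‖x - x‖ ^ δ)) :=
    ((continuous_const.mul ((continuous_id.sub continuous_const).norm.rpow_const
      fun _ => Or.inr hδ.le)).tendsto x).mono_left nhdsWithin_le_nhds
  rw [sub_self, norm_zero, zero_rpow hδ.ne', mul_zero] at hbound
  exact squeeze_zero' (Eventually.of_forall fun _ => norm_nonneg _)
    (eventually_nhdsWithin_of_forall fun y hy => hf y hy x hx) hbound

theorem abs_max_neg_min_le {M t : ℝ} (hM : 0 ≤ M) : |max (-M) (min M t)| ≤ M :=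
  abs_le.mpr ⟨le_max_left _ _, max_le (by linarith) (min_le_left _ _)⟩

theorem max_neg_min_mul_sub_nonneg {M t : ℝ} (hM : 0 ≤ M) :
    0 ≤ max (-M) (min M t) * (t - max (-M) (min M t)) := by
  simp only [max_def, min_def]
  split_ifs <;> nlinarith

theorem max_neg_min_eq_self {M t : ℝ} (ht : |t| ≤ M) : max (-M) (min M t) = t := by
  rw [min_eq_right (abs_le.mp ht).2, max_eq_right (abs_le.mp ht).1]

section Modular

variable {X : Type*} [MeasurableSpace X] {μ : Measure X}

theorem ofReal_integral_le_lintegral_ofReal {f : X → ℝ} (hf : Integrable f μ) :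
    ENNReal.ofReal (∫ x, f x ∂μ) ≤ ∫⁻ x, ENNReal.ofReal (f x) ∂μ :=
  ENNReal.ofReal_le_of_le_toReal <| by
    rw [integral_eq_lintegral_pos_part_sub_lintegral_neg_part hf]
    exact sub_le_self _ ENNReal.toReal_nonneg

theorem lintegral_le_liminf_of_tendsto {g : ℕ → X → ℝ≥0∞} {G : X → ℝ≥0∞}
    (hg : ∀ n, AEMeasurable (g n) μ) (hlim : ∀ᵐ x ∂μ, Tendsto (fun n => g n x) atTop (𝓝 (G x))) :
    ∫⁻ x, G x ∂μ ≤ liminf (fun n => ∫⁻ x, g n x ∂μ) atTop :=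
  calc ∫⁻ x, G x ∂μ = ∫⁻ x, liminf (fun n => g n x) atTop ∂μ :=
        lintegral_congr_ae (hlim.mono fun _ hx => hx.liminf_eq.symm)
    _ ≤ _ := lintegral_liminf_le' hg

theorem lintegral_abs_rpow_le_liminf_of_tendsto_exponent {F p : X → ℝ} {q : ℕ → X → ℝ}
    (hF : AEMeasurable F μ) (hq : ∀ n, AEMeasurable (q n) μ) (hp : ∀ᵐ x ∂μ, 0 < p x)
    (hlim : ∀ᵐ x ∂μ, Tendsto (fun n => q n x) atTop (𝓝 (p x))) :
    ∫⁻ x, ENNReal.ofReal (|F x| ^ p x) ∂μ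
      ≤ liminf (fun n => ∫⁻ x, ENNReal.ofReal (|F x| ^ q n x) ∂μ) atTop := by
  refine lintegral_le_liminf_of_tendsto (fun n => (hF.abs.pow (hq n)).ennreal_ofReal) ?_
  filter_upwards [hp, hlim] with x hpx hx
  exact (ENNReal.continuous_ofReal.tendsto _).comp
    ((continuousAt_rpow (|F x|, p x) (Or.inr hpx)).tendsto.comp
      (tendsto_const_nhds.prodMk_nhds hx))

theorem liminf_lintegral_abs_rpow_sub_le {s : Set X} {f pk : ℕ → X → ℝ} {p : X → ℝ} {ε : ℝ}
    (hε : 0 < ε) (hunif : TendstoUniformlyOn pk p atTop s) (hs : ∀ᵐ x ∂μ, x ∈ s)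
    (hp : ∀ᵐ x ∂μ, 1 ≤ p x - ε) :
    liminf (fun k => ∫⁻ x, ENNReal.ofReal (|f k x| ^ (p x - ε)) ∂μ) atTop
      ≤ liminf (fun k => ∫⁻ x, ENNReal.ofReal (|f k x| ^ pk k x) ∂μ) atTop
        + ENNReal.ofReal (2 * ε) * μ univ := by
  rw [← liminf_add_const _ _ _ (by isBoundedDefault) (by isBoundedDefault)]
  refine liminf_le_liminf ?_
  filter_upwards [Metric.tendstoUniformlyOn_iff.mp hunif ε hε] with k hk
  rw [← lintegral_const, ← lintegral_add_right _ measurable_const]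
  refine lintegral_mono_ae ?_
  filter_upwards [hs, hp] with x hx hpx
  have hclose := abs_lt.mp (Real.dist_eq (p x) (pk k x) ▸ hk x hx)
  have hgap := rpow_le_rpow_add_sub (abs_nonneg (f k x)) hpx
    (show p x - ε ≤ pk k x by linarith)
  rw [← ENNReal.ofReal_add (rpow_nonneg (abs_nonneg _) _) (by positivity)]
  exact ENNReal.ofReal_le_ofReal (by linarith)

theorem ofReal_integral_add_le_liminf {f φ : ℕ → X → ℝ} {F g h : X → ℝ}
    (hf : ∀ k, Integrable (f k) μ) (hF : Integrable F μ) (hg : MemLp g ∞ μ)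
    (hh : Integrable h μ)
    (hweak : Tendsto (fun k => ∫ x, f k x * g x ∂μ) atTop (𝓝 (∫ x, F x * g x ∂μ)))
    (hle : ∀ k, ∀ᵐ x ∂μ, h x + f k x * g x ≤ φ k x) :
    ENNReal.ofReal (∫ x, h x + F x * g x ∂μ)
      ≤ liminf (fun k => ∫⁻ x, ENNReal.ofReal (φ k x) ∂μ) atTop := by
  have hlim := (ENNReal.continuous_ofReal.tendsto _).comp
    ((tendsto_const_nhds (x := ∫ x, h x ∂μ)).add hweak)
  have hFg : Integrable (fun x => F x * g x) μ := hF.mul_of_top_left hg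
  rw [integral_add hh hFg, ← hlim.liminf_eq]
  refine liminf_le_liminf (Eventually.of_forall fun k => ?_)
  have hfg : Integrable (fun x => f k x * g x) μ := (hf k).mul_of_top_left hg
  calc ENNReal.ofReal (∫ x, h x ∂μ + ∫ x, f k x * g x ∂μ)
      = ENNReal.ofReal (∫ x, h x + f k x * g x ∂μ) := by rw [integral_add hh hfg]
    _ ≤ ∫⁻ x, ENNReal.ofReal (h x + f k x * g x) ∂μ :=
        ofReal_integral_le_lintegral_ofReal (hh.add hfg)
    _ ≤ _ := lintegral_mono_ae ((hle k).mono fun x hx => ENNReal.ofReal_le_ofReal hx)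

variable [IsFiniteMeasure μ] {f : ℕ → X → ℝ} {F q : X → ℝ} {β : ℝ}

theorem lintegral_abs_rpow_le_liminf_of_bounded (hf : ∀ k, Integrable (f k) μ)
    (hF : Integrable F μ) (hq : AEMeasurable q μ) (hqβ : ∀ᵐ x ∂μ, 1 < q x ∧ q x ≤ β)
    (hweak : ∀ g, MemLp g ∞ μ →
      Tendsto (fun k => ∫ x, f k x * g x ∂μ) atTop (𝓝 (∫ x, F x * g x ∂μ)))
    {u : X → ℝ} {M : ℝ} (hu : AEMeasurable u μ) (huM : ∀ x, |u x| ≤ M)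
    (hsign : ∀ x, 0 ≤ u x * (F x - u x)) :
    ∫⁻ x, ENNReal.ofReal (|u x| ^ q x) ∂μ
      ≤ liminf (fun k => ∫⁻ x, ENNReal.ofReal (|f k x| ^ q x) ∂μ) atTop := by
  -- `g` is the derivative of `|·|^q` at `u`.
  set g : X → ℝ := fun x => q x * |u x| ^ (q x - 2) * u x
  have hg_bdd : ∀ᵐ x ∂μ, ‖g x‖ ≤ β * max 1 M ^ β :=
    hqβ.mono fun x hx => abs_mul_abs_rpow_sub_two_mul_le hx.1 hx.2 (huM x)
  have hg : MemLp g ∞ μ := memLp_top_of_bound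
    ((hq.mul (hu.abs.pow (hq.sub aemeasurable_const))).mul hu).aestronglyMeasurable _ hg_bdd
  have hupow : Integrable (fun x => |u x| ^ q x) μ := by
    refine (memLp_top_of_bound (hu.abs.pow hq).aestronglyMeasurable (max 1 M ^ β) ?_)
      |>.integrable le_top
    filter_upwards [hqβ] with x ⟨hq1, hqβx⟩
    rw [norm_eq_abs, abs_of_nonneg (rpow_nonneg (abs_nonneg _) _)]
    exact rpow_le_max_one_rpow (abs_nonneg _) (huM x) (by linarith) hqβx
  have hu_int : Integrable u μ :=
    (memLp_top_of_bound hu.aestronglyMeasurable M (ae_of_all _ huM)).integrable le_top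
  have hh : Integrable (fun x => |u x| ^ q x - u x * g x) μ :=
    hupow.sub (hu_int.mul_of_top_left hg)
  calc ∫⁻ x, ENNReal.ofReal (|u x| ^ q x) ∂μ = ENNReal.ofReal (∫ x, |u x| ^ q x ∂μ) :=
        (ofReal_integral_eq_lintegral_ofReal hupow
          (ae_of_all _ fun x => rpow_nonneg (abs_nonneg _) _)).symm
    _ ≤ ENNReal.ofReal (∫ x, (|u x| ^ q x - u x * g x) + F x * g x ∂μ) := by
        refine ENNReal.ofReal_le_ofReal
          (integral_mono_ae hupow (hh.add (hF.mul_of_top_left hg)) ?_)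
        filter_upwards [hqβ] with x hx
        linear_combination mul_nonneg (mul_nonneg (by linarith [hx.1] : 0 ≤ q x)
          (rpow_nonneg (abs_nonneg (u x)) (q x - 2))) (hsign x)
    _ ≤ _ := ofReal_integral_add_le_liminf hf hF hg hh (hweak g hg) fun k =>
        hqβ.mono fun x hx => by
          linear_combination abs_rpow_add_mul_sub_le (a := f k x) (b := u x) hx.1

theorem lintegral_abs_rpow_le_liminf_of_weak (hf : ∀ k, Integrable (f k) μ)
    (hF : Integrable F μ) (hq : AEMeasurable q μ) (hqβ : ∀ᵐ x ∂μ, 1 < q x ∧ q x ≤ β)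
    (hweak : ∀ g, MemLp g ∞ μ →
      Tendsto (fun k => ∫ x, f k x * g x ∂μ) atTop (𝓝 (∫ x, F x * g x ∂μ))) :
    ∫⁻ x, ENNReal.ofReal (|F x| ^ q x) ∂μ
      ≤ liminf (fun k => ∫⁻ x, ENNReal.ofReal (|f k x| ^ q x) ∂μ) atTop := by
  set T : ℕ → X → ℝ := fun M x => max (-(M : ℝ)) (min (M : ℝ) (F x))
  have hT : ∀ M, AEMeasurable (T M) μ := fun M =>
    aemeasurable_const.max (aemeasurable_const.min hF.aemeasurable)
  calc ∫⁻ x, ENNReal.ofReal (|F x| ^ q x) ∂μ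
      ≤ liminf (fun M => ∫⁻ x, ENNReal.ofReal (|T M x| ^ q x) ∂μ) atTop := by
        refine lintegral_le_liminf_of_tendsto (fun M => ((hT M).abs.pow hq).ennreal_ofReal)
          (ae_of_all _ fun x => tendsto_const_nhds.congr' ?_)
        filter_upwards [eventually_ge_atTop ⌈|F x|⌉₊] with M hM
        rw [show T M x = F x from max_neg_min_eq_self ((Nat.le_ceil _).trans (Nat.cast_le.mpr hM))]
    _ ≤ liminf (fun _ : ℕ =>
          liminf (fun k => ∫⁻ x, ENNReal.ofReal (|f k x| ^ q x) ∂μ) atTop) atTop :=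
        liminf_le_liminf <| Eventually.of_forall fun M =>
          lintegral_abs_rpow_le_liminf_of_bounded hf hF hq hqβ hweak (hT M)
            (fun _ => abs_max_neg_min_le M.cast_nonneg)
            (fun _ => max_neg_min_mul_sub_nonneg M.cast_nonneg)
    _ = _ := liminf_const _

theorem lintegral_abs_rpow_le_liminf_of_tendstoUniformlyOn {s : Set X} {pk : ℕ → X → ℝ}
    {p : X → ℝ} {α : ℝ} (hα : 1 < α) (hunif : TendstoUniformlyOn pk p atTop s)
    (hs : ∀ᵐ x ∂μ, x ∈ s) (hp : AEMeasurable p μ) (hpαβ : ∀ᵐ x ∂μ, α ≤ p x ∧ p x ≤ β)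
    (hf : ∀ k, Integrable (f k) μ) (hF : Integrable F μ)
    (hweak : ∀ g, MemLp g ∞ μ →
      Tendsto (fun k => ∫ x, f k x * g x ∂μ) atTop (𝓝 (∫ x, F x * g x ∂μ))) :
    ∫⁻ x, ENNReal.ofReal (|F x| ^ p x) ∂μ
      ≤ liminf (fun k => ∫⁻ x, ENNReal.ofReal (|f k x| ^ pk k x) ∂μ) atTop := by
  obtain ⟨ε, -, hε, hε0⟩ := exists_seq_strictAnti_tendsto' (sub_pos.mpr hα)
  have hshift : ∀ n, ∫⁻ x, ENNReal.ofReal (|F x| ^ (p x - ε n)) ∂μ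
      ≤ liminf (fun k => ∫⁻ x, ENNReal.ofReal (|f k x| ^ pk k x) ∂μ) atTop
        + ENNReal.ofReal (2 * ε n) * μ univ := fun n =>
    (lintegral_abs_rpow_le_liminf_of_weak (q := fun x => p x - ε n) hf hF
      (hp.sub aemeasurable_const)
      (hpαβ.mono fun x hx => ⟨by linarith [(hε n).2, hx.1], by linarith [(hε n).1, hx.2]⟩)
      hweak).trans
    (liminf_lintegral_abs_rpow_sub_le (hε n).1 hunif hs
      (hpαβ.mono fun x hx => by linarith [(hε n).2, hx.1]))
  have hslack : Tendsto (fun n => ENNReal.ofReal (2 * ε n) * μ univ) atTop (𝓝 0) := by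
    simpa using ENNReal.Tendsto.mul_const (ENNReal.tendsto_ofReal (hε0.const_mul 2))
      (Or.inr (measure_ne_top μ univ))
  calc ∫⁻ x, ENNReal.ofReal (|F x| ^ p x) ∂μ
      ≤ liminf (fun n => ∫⁻ x, ENNReal.ofReal (|F x| ^ (p x - ε n)) ∂μ) atTop :=
        lintegral_abs_rpow_le_liminf_of_tendsto_exponent hF.aemeasurable
          (fun n => hp.sub aemeasurable_const) (hpαβ.mono fun x hx => by linarith [hx.1])
          (ae_of_all _ fun x => by simpa using tendsto_const_nhds.sub hε0)
    _ ≤ liminf (fun n => liminf (fun k => ∫⁻ x, ENNReal.ofReal (|f k x| ^ pk k x) ∂μ) atTop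
          + ENNReal.ofReal (2 * ε n) * μ univ) atTop :=
        liminf_le_liminf (Eventually.of_forall hshift)
    _ = _ := by simpa using (tendsto_const_nhds.add hslack).liminf_eq

end Modular

theorem statement16_general {N : ℕ}
    (Ω : Set (EuclideanSpace ℝ (Fin N))) (hΩ_open : IsOpen Ω)
    (hΩ_bdd : Bornology.IsBounded Ω)
    (δ : ℝ) (hδ : δ ∈ Ioc (0 : ℝ) 1)
    (pk : ℕ → EuclideanSpace ℝ (Fin N) → ℝ) (p : EuclideanSpace ℝ (Fin N) → ℝ)
    (α β : ℝ) (hα : 1 < α)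
    (hp_hold : ∃ C : ℝ, ∀ x ∈ closure Ω, ∀ y ∈ closure Ω,
      |p x - p y| ≤ C * ‖x - y‖ ^ δ)
    (hunif : TendstoUniformlyOn pk p atTop (closure Ω))
    (hbnd : ∀ k, ∀ x ∈ Ω, α ≤ pk k x ∧ pk k x ≤ β)
    (f : ℕ → EuclideanSpace ℝ (Fin N) → ℝ) (flim : EuclideanSpace ℝ (Fin N) → ℝ)
    (hfk : ∀ k, MemLp (f k) (ENNReal.ofReal α) (volume.restrict Ω))
    (hflim : MemLp flim (ENNReal.ofReal α) (volume.restrict Ω))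
    (hlimsup : atTop.limsup
      (fun k => ∫⁻ x in Ω, ENNReal.ofReal (|f k x| ^ pk k x)) < ⊤)
    (hweak : ∀ g : EuclideanSpace ℝ (Fin N) → ℝ,
      MemLp g (ENNReal.ofReal (α / (α - 1))) (volume.restrict Ω) →
      Tendsto (fun k => ∫ x in Ω, f k x * g x) atTop (𝓝 (∫ x in Ω, flim x * g x))) :
    (∫⁻ x in Ω, ENNReal.ofReal (|flim x| ^ p x)) < ⊤ ∧
    (∫⁻ x in Ω, ENNReal.ofReal (|flim x| ^ p x)) ≤
      atTop.liminf (fun k => ∫⁻ x in Ω, ENNReal.ofReal (|f k x| ^ pk k x)) := by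
  have hΩ : ∀ᵐ x ∂(volume.restrict Ω), x ∈ Ω := ae_restrict_mem hΩ_open.measurableSet
  have : IsFiniteMeasure (volume.restrict Ω) :=
    isFiniteMeasure_restrict.mpr hΩ_bdd.measure_lt_top.ne
  have hpαβ : ∀ᵐ x ∂(volume.restrict Ω), α ≤ p x ∧ p x ≤ β := hΩ.mono fun x hx =>
    have hlim := hunif.tendsto_at (subset_closure hx)
    ⟨ge_of_tendsto' hlim fun k => (hbnd k x hx).1, le_of_tendsto' hlim fun k => (hbnd k x hx).2⟩
  obtain ⟨C, hC⟩ := hp_hold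
  have hp : AEMeasurable p (volume.restrict Ω) :=
    ((continuousOn_of_abs_sub_le_mul_rpow hδ.1 hC).mono subset_closure).aemeasurable
      hΩ_open.measurableSet
  have hα1 : 1 ≤ ENNReal.ofReal α := ENNReal.one_le_ofReal.mpr hα.le
  have hmain := lintegral_abs_rpow_le_liminf_of_tendstoUniformlyOn hα hunif
    (hΩ.mono fun _ hx => subset_closure hx) hp hpαβ (fun k => (hfk k).integrable hα1)
    (hflim.integrable hα1) fun g hg => hweak g (hg.mono_exponent le_top)
  exact ⟨lt_of_le_of_lt (hmain.trans liminf_le_limsup) hlimsup, hmain⟩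

/-- Lower semicontinuity of the variable-exponent modular along a sequence of
Hölder-continuous exponents converging uniformly, with respect to weak `L^α`
convergence of the functions. -/
theorem statement16 {N : ℕ}
    (Ω : Set (EuclideanSpace ℝ (Fin N))) (hΩ_open : IsOpen Ω)
    (hΩ_bdd : Bornology.IsBounded Ω)
    (δ : ℝ) (hδ : δ ∈ Ioc (0 : ℝ) 1)
    (pk : ℕ → EuclideanSpace ℝ (Fin N) → ℝ) (p : EuclideanSpace ℝ (Fin N) → ℝ)
    (α β : ℝ) (hα : 1 < α) (hαβ : α ≤ β)
    (hpk_hold : ∀ k, ∃ C : ℝ, ∀ x ∈ closure Ω, ∀ y ∈ closure Ω,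
      |pk k x - pk k y| ≤ C * ‖x - y‖ ^ δ)
    (hp_hold : ∃ C : ℝ, ∀ x ∈ closure Ω, ∀ y ∈ closure Ω,
      |p x - p y| ≤ C * ‖x - y‖ ^ δ)
    (hunif : TendstoUniformlyOn pk p atTop (closure Ω))
    (hbnd : ∀ k, ∀ x ∈ Ω, α ≤ pk k x ∧ pk k x ≤ β)
    (f : ℕ → EuclideanSpace ℝ (Fin N) → ℝ) (flim : EuclideanSpace ℝ (Fin N) → ℝ)
    (hfk : ∀ k, MemLp (f k) (ENNReal.ofReal α) (volume.restrict Ω))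
    (hflim : MemLp flim (ENNReal.ofReal α) (volume.restrict Ω))
    (hlimsup : atTop.limsup
      (fun k => ∫⁻ x in Ω, ENNReal.ofReal (|f k x| ^ pk k x)) < ⊤)
    (hweak : ∀ g : EuclideanSpace ℝ (Fin N) → ℝ,
      MemLp g (ENNReal.ofReal (α / (α - 1))) (volume.restrict Ω) →
      Tendsto (fun k => ∫ x in Ω, f k x * g x) atTop (𝓝 (∫ x in Ω, flim x * g x))) :
    (∫⁻ x in Ω, ENNReal.ofReal (|flim x| ^ p x)) < ⊤ ∧
    (∫⁻ x in Ω, ENNReal.ofReal (|flim x| ^ p x)) ≤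
      atTop.liminf (fun k => ∫⁻ x in Ω, ENNReal.ofReal (|f k x| ^ pk k x)) :=
  statement16_general Ω hΩ_open hΩ_bdd δ hδ pk p α β hα hp_hold hunif hbnd f flim hfk hflim hlimsup
    hweak
end
end

section
/- Let Ω ⊂ ℝ^N be a bounded open set, δ ∈ (0,1], and let p_k, p ∈ C^{0,δ}(cl Ω) for k = 1, 2, … with p_k → p uniformly on cl Ω and 1 < α ≤ p_k(x) ≤ β < ∞ for all k and all x ∈ Ω. Let {f_k} be a sequence of measurable functions with limsup_{k→∞} ∫_Ω |f_k(x)|^{p_k(x)} dx < ∞, and suppose f_k converges weakly in L^α(Ω) to f, i.e., ∫_Ω f_k g dx → ∫_Ω f g dx for every g ∈ L^{α/(α−1)}(Ω). Then liminf_{k→∞} ∫_Ω (1/p_k(x)) |f_k(x)|^{p_k(x)} dx ≥ ∫_Ω (1/p(x)) |f(x)|^{p(x)} dx. -/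
open MeasureTheory Real Set Filter
open scoped ENNReal Topology

/-!
Test the weak convergence `f_k ⇀ f` against the truncated duality function
`g = sign f · min(|f|, c)^(p-1)`, which is bounded. Young's inequality with the conjugate exponent
`q_k = p_k/(p_k-1)` gives `∫ f_k g - ∫ |g|^{q_k}/q_k ≤ ∫ |f_k|^{p_k}/p_k`. As `k → ∞` the left side
tends to `∫ f g - ∫ |g|^q/q` (weak convergence, and dominated convergence since `p_k → p`), which
dominates `∫ min(|f|, c)^p/p` because Young's inequality is an equality for this `g` where
`|f| ≤ c`. Letting `c → ∞` concludes by monotone convergence.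
-/

lemma continuousOn_of_abs_sub_le_mul_norm_rpow {E : Type*} [SeminormedAddCommGroup E]
    {s : Set E} {g : E → ℝ} {C δ : ℝ} (hδ : 0 < δ)
    (h : ∀ x ∈ s, ∀ y ∈ s, |g x - g y| ≤ C * ‖x - y‖ ^ δ) : ContinuousOn g s := by
  intro x hx
  rw [ContinuousWithinAt, tendsto_iff_dist_tendsto_zero]
  have hnorm : Tendsto (fun y : E => ‖y - x‖) (𝓝[s] x) (𝓝 0) :=
    tendsto_iff_norm_sub_tendsto_zero.1 (tendsto_nhdsWithin_of_tendsto_nhds tendsto_id)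
  have hpow : Tendsto (fun t : ℝ => C * t ^ δ) (𝓝 0) (𝓝 0) := by
    simpa [zero_rpow hδ.ne'] using
      tendsto_const_nhds.mul ((continuousAt_rpow_const 0 δ (Or.inr hδ.le)).tendsto)
  refine squeeze_zero' (.of_forall fun y => dist_nonneg) ?_ (hpow.comp hnorm)
  filter_upwards [self_mem_nhdsWithin] with y hy
  exact h y hy x hx

lemma Real.measurable_sign : Measurable Real.sign :=
  Measurable.ite measurableSet_Iio measurable_const
    (Measurable.ite measurableSet_Ioi measurable_const measurable_const)

lemma Real.abs_sign_le_one (y : ℝ) : |Real.sign y| ≤ 1 := by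
  rcases Real.sign_apply_eq y with h | h | h <;> simp [h]

lemma Real.mul_sign_self (y : ℝ) : y * Real.sign y = |y| := by
  rcases lt_trichotomy y 0 with h | rfl | h
  · rw [Real.sign_of_neg h, abs_of_neg h, mul_neg_one]
  · simp
  · rw [Real.sign_of_pos h, abs_of_pos h, mul_one]

lemma Real.measurable_conjExponent : Measurable Real.conjExponent := by
  unfold Real.conjExponent
  fun_prop

lemma Real.conjExponent_le_conjExponent {α p : ℝ} (hα : 1 < α) (hαp : α ≤ p) :
    p.conjExponent ≤ α.conjExponent := by
  unfold Real.conjExponent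
  rw [div_le_div_iff₀ (by linarith) (by linarith)]
  nlinarith

lemma rpow_le_max_one_rpow_s17 {x c e E : ℝ} (hx : 0 ≤ x) (hxc : x ≤ c) (he : 0 ≤ e)
    (heE : e ≤ E) : x ^ e ≤ max 1 c ^ E :=
  (rpow_le_rpow hx (hxc.trans (le_max_right 1 c)) he).trans
    (rpow_le_rpow_of_exponent_le (le_max_left 1 c) heE)

lemma norm_one_div_conjExponent_mul_rpow_le {α p b M : ℝ} (hα : 1 < α) (hαp : α ≤ p)
    (hb : |b| ≤ M) :
    ‖1 / p.conjExponent * |b| ^ p.conjExponent‖ ≤ max 1 M ^ α.conjExponent := by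
  have hq : 1 < p.conjExponent :=
    (HolderConjugate.conjExponent (hα.trans_le hαp)).symm.lt
  rw [norm_of_nonneg (by positivity)]
  calc 1 / p.conjExponent * |b| ^ p.conjExponent ≤ 1 * |b| ^ p.conjExponent := by
        gcongr
        exact (div_le_one (by linarith)).2 hq.le
    _ ≤ max 1 M ^ α.conjExponent := by
        rw [one_mul]
        exact rpow_le_max_one_rpow_s17 (abs_nonneg b) hb (by linarith)
          (Real.conjExponent_le_conjExponent hα hαp)

/-- The duality map `y ↦ sign y · |y|^(p-1)` of `L^p`, applied to `y` truncated at level `c`. -/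
noncomputable def truncDual (p c y : ℝ) : ℝ := Real.sign y * min |y| c ^ (p - 1)

section truncDual

variable {p c : ℝ}

lemma abs_truncDual_le (hc : 0 ≤ c) (y : ℝ) : |truncDual p c y| ≤ min |y| c ^ (p - 1) := by
  have hm : 0 ≤ min |y| c := le_min (abs_nonneg y) hc
  rw [truncDual, abs_mul, abs_of_nonneg (rpow_nonneg hm _)]
  exact mul_le_of_le_one_left (rpow_nonneg hm _) (Real.abs_sign_le_one y)

lemma measurable_truncDual (c : ℝ) : Measurable fun z : ℝ × ℝ => truncDual z.1 c z.2 := by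
  unfold truncDual
  have := Real.measurable_sign
  fun_prop

/-- Young's inequality `y g ≤ |y|^p/p + |g|^q/q` is an equality for `g = truncDual p c y`
where `|y| ≤ c`, and is off in the right direction elsewhere. -/
lemma one_div_mul_min_rpow_le_mul_truncDual_sub (hp : 1 < p) (hc : 0 ≤ c) (y : ℝ) :
    1 / p * min |y| c ^ p ≤
      y * truncDual p c y - 1 / p.conjExponent * |truncDual p c y| ^ p.conjExponent := by
  have hpq := HolderConjugate.conjExponent hp
  set m := min |y| c
  have hm : 0 ≤ m := le_min (abs_nonneg y) hc
  have hmul : m * m ^ (p - 1) = m ^ p := by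
    rw [← rpow_one_add' hm (by linarith), add_sub_cancel]
  have hdual : m ^ p ≤ y * truncDual p c y := by
    rw [truncDual, ← mul_assoc, Real.mul_sign_self, ← hmul]
    exact mul_le_mul_of_nonneg_right (min_le_left _ _) (rpow_nonneg hm _)
  have hconj : |truncDual p c y| ^ p.conjExponent ≤ m ^ p := by
    calc |truncDual p c y| ^ p.conjExponent ≤ (m ^ (p - 1)) ^ p.conjExponent :=
          rpow_le_rpow (abs_nonneg _) (abs_truncDual_le hc y) hpq.symm.nonneg
      _ = m ^ p := by rw [← rpow_mul hm, hpq.sub_one_mul_conj]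
  have hsum : 1 / p + 1 / p.conjExponent = 1 := by
    simpa only [one_div] using hpq.inv_add_inv_eq_one
  have hq0 : 0 ≤ 1 / p.conjExponent := one_div_nonneg.2 hpq.symm.nonneg
  have hsplit : 1 / p * m ^ p = m ^ p - 1 / p.conjExponent * m ^ p := by
    linear_combination m ^ p * hsum
  linarith [mul_le_mul_of_nonneg_left hconj hq0]

end truncDual

section Modular

variable {X : Type*} [MeasurableSpace X] {μ : Measure X}

lemma ofReal_integral_mul_sub_le_lintegral {f g p : X → ℝ} (hf : AEMeasurable f μ)
    (hp : AEMeasurable p μ) (hp1 : ∀ᵐ x ∂μ, 1 < p x) (hfg : Integrable (fun x => f x * g x) μ)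
    (hv : Integrable (fun x => 1 / (p x).conjExponent * |g x| ^ (p x).conjExponent) μ) :
    ENNReal.ofReal ((∫ x, f x * g x ∂μ) -
        ∫ x, 1 / (p x).conjExponent * |g x| ^ (p x).conjExponent ∂μ) ≤
      ∫⁻ x, ENNReal.ofReal (1 / p x * |f x| ^ p x) ∂μ := by
  have hw0 : 0 ≤ᵐ[μ] fun x => 1 / p x * |f x| ^ p x :=
    hp1.mono fun x hx => by positivity
  rcases eq_top_or_lt_top (∫⁻ x, ENNReal.ofReal (1 / p x * |f x| ^ p x) ∂μ) with htop | hfin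
  · exact htop ▸ le_top
  have hw : Integrable (fun x => 1 / p x * |f x| ^ p x) μ :=
    ⟨((aemeasurable_const.div hp).mul (hf.abs.pow hp)).aestronglyMeasurable,
      (hasFiniteIntegral_iff_ofReal hw0).2 hfin⟩
  rw [← ofReal_integral_eq_lintegral_ofReal hw hw0]
  refine ENNReal.ofReal_le_ofReal (sub_le_iff_le_add.2 ?_)
  rw [← integral_add hw hv]
  refine integral_mono_ae hfg (hw.add hv) (hp1.mono fun x hx => ?_)
  exact (young_inequality (f x) (g x) (HolderConjugate.conjExponent hx)).trans_eq (by ring)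

lemma integrable_conjExponent_modular [IsFiniteMeasure μ] {α M : ℝ} (hα : 1 < α) {g p : X → ℝ}
    (hg : AEMeasurable g μ) (hgM : ∀ᵐ x ∂μ, |g x| ≤ M) (hp : AEMeasurable p μ)
    (hαp : ∀ᵐ x ∂μ, α ≤ p x) :
    Integrable (fun x => 1 / (p x).conjExponent * |g x| ^ (p x).conjExponent) μ := by
  have hq : AEMeasurable (fun x => (p x).conjExponent) μ :=
    Real.measurable_conjExponent.comp_aemeasurable hp
  refine (integrable_const (max 1 M ^ α.conjExponent)).mono'
    ((aemeasurable_const.div hq).mul (hg.abs.pow hq)).aestronglyMeasurable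
    ((hgM.and hαp).mono fun x hx => norm_one_div_conjExponent_mul_rpow_le hα hx.2 hx.1)

lemma tendsto_integral_conjExponent_modular [IsFiniteMeasure μ] {α M : ℝ} (hα : 1 < α)
    {g : X → ℝ} {pk : ℕ → X → ℝ} {p : X → ℝ} (hg : AEMeasurable g μ)
    (hgM : ∀ᵐ x ∂μ, |g x| ≤ M) (hpk : ∀ k, AEMeasurable (pk k) μ)
    (hαpk : ∀ k, ∀ᵐ x ∂μ, α ≤ pk k x)
    (hlim : ∀ᵐ x ∂μ, Tendsto (fun k => pk k x) atTop (𝓝 (p x))) :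
    Tendsto (fun k => ∫ x, 1 / (pk k x).conjExponent * |g x| ^ (pk k x).conjExponent ∂μ)
      atTop (𝓝 (∫ x, 1 / (p x).conjExponent * |g x| ^ (p x).conjExponent ∂μ)) := by
  refine tendsto_integral_of_dominated_convergence (fun _ => max 1 M ^ α.conjExponent)
    (fun k => (integrable_conjExponent_modular hα hg hgM (hpk k) (hαpk k)).aestronglyMeasurable)
    (integrable_const _)
    (fun k => (hgM.and (hαpk k)).mono fun x hx =>
      norm_one_div_conjExponent_mul_rpow_le hα hx.2 hx.1) ?_
  rw [← ae_all_iff] at hαpk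
  filter_upwards [hlim, hαpk] with x hx hαx
  have hp1 : 1 < p x := hα.trans_le (ge_of_tendsto' hx hαx)
  have hq1 : 1 < (p x).conjExponent := (HolderConjugate.conjExponent hp1).symm.lt
  have hqx : Tendsto (fun k => (pk k x).conjExponent) atTop (𝓝 (p x).conjExponent) :=
    hx.div (hx.sub_const 1) (sub_ne_zero.2 hp1.ne')
  exact (tendsto_const_nhds.div hqx (by positivity)).mul
    (tendsto_const_nhds.rpow hqx (Or.inr (by positivity)))

lemma tendsto_lintegral_truncated_modular {p y : X → ℝ} (hp : AEMeasurable p μ)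
    (hy : AEMeasurable y μ) (hp0 : ∀ᵐ x ∂μ, 0 ≤ p x) :
    Tendsto (fun n : ℕ => ∫⁻ x, ENNReal.ofReal (1 / p x * min |y x| n ^ p x) ∂μ) atTop
      (𝓝 (∫⁻ x, ENNReal.ofReal (1 / p x * |y x| ^ p x) ∂μ)) := by
  refine lintegral_tendsto_of_tendsto_of_monotone (fun n => ?_) ?_ (.of_forall fun x => ?_)
  · exact ((aemeasurable_const.div hp).mul
      ((hy.abs.min aemeasurable_const).pow hp)).ennreal_ofReal
  · filter_upwards [hp0] with x hx m n hmn
    have hm : 0 ≤ min |y x| m := le_min (abs_nonneg _) m.cast_nonneg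
    dsimp only
    gcongr
  · refine tendsto_const_nhds.congr' ?_
    filter_upwards [tendsto_natCast_atTop_atTop.eventually_ge_atTop |y x|] with n hn
    rw [min_eq_left hn]

variable [IsFiniteMeasure μ] {α β : ℝ} {pk : ℕ → X → ℝ} {p : X → ℝ} {f : ℕ → X → ℝ}
  {flim : X → ℝ}

lemma lintegral_truncated_modular_le_liminf (hα : 1 < α) {c : ℝ} (hc : 0 ≤ c)
    (hpk : ∀ k, AEMeasurable (pk k) μ) (hp : AEMeasurable p μ)
    (hαpk : ∀ k, ∀ᵐ x ∂μ, α ≤ pk k x) (hp_bnd : ∀ᵐ x ∂μ, α ≤ p x ∧ p x ≤ β)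
    (hlim : ∀ᵐ x ∂μ, Tendsto (fun k => pk k x) atTop (𝓝 (p x)))
    (hf : ∀ k, Integrable (f k) μ) (hflim : Integrable flim μ)
    (hweak : ∀ g : X → ℝ, MemLp g ∞ μ →
      Tendsto (fun k => ∫ x, f k x * g x ∂μ) atTop (𝓝 (∫ x, flim x * g x ∂μ))) :
    ∫⁻ x, ENNReal.ofReal (1 / p x * min |flim x| c ^ p x) ∂μ ≤
      atTop.liminf fun k => ∫⁻ x, ENNReal.ofReal (1 / pk k x * |f k x| ^ pk k x) ∂μ := by
  set g : X → ℝ := fun x => truncDual (p x) c (flim x)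
  have hg : AEMeasurable g μ :=
    (measurable_truncDual c).comp_aemeasurable (hp.prodMk hflim.aemeasurable)
  have hgM : ∀ᵐ x ∂μ, |g x| ≤ max 1 c ^ (β - 1) := hp_bnd.mono fun x hx =>
    (abs_truncDual_le hc _).trans (rpow_le_max_one_rpow_s17 (le_min (abs_nonneg _) hc)
      (min_le_right _ _) (by linarith [hx.1]) (by linarith [hx.2]))
  have hg_top : MemLp g ∞ μ := memLp_top_of_bound hg.aestronglyMeasurable _ hgM
  have hαp : ∀ᵐ x ∂μ, α ≤ p x := hp_bnd.mono fun x hx => hx.1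
  have hV := integrable_conjExponent_modular hα hg hgM hp hαp
  have hyoung : ∀ k, ENNReal.ofReal ((∫ x, f k x * g x ∂μ) -
      ∫ x, 1 / (pk k x).conjExponent * |g x| ^ (pk k x).conjExponent ∂μ) ≤
      ∫⁻ x, ENNReal.ofReal (1 / pk k x * |f k x| ^ pk k x) ∂μ := fun k =>
    ofReal_integral_mul_sub_le_lintegral (hf k).aemeasurable (hpk k)
      ((hαpk k).mono fun x hx => hα.trans_le hx) ((hf k).mul_of_top_left hg_top)
      (integrable_conjExponent_modular hα hg hgM (hpk k) (hαpk k))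
  have htendsto := (ENNReal.continuous_ofReal.tendsto _).comp
    ((hweak g hg_top).sub (tendsto_integral_conjExponent_modular hα hg hgM hpk hαpk hlim))
  have hflimg : Integrable (fun x => flim x * g x) μ := hflim.mul_of_top_left hg_top
  have hyoung_eq : ∀ᵐ x ∂μ, 1 / p x * min |flim x| c ^ p x ≤
      flim x * g x - 1 / (p x).conjExponent * |g x| ^ (p x).conjExponent :=
    hαp.mono fun x hx => one_div_mul_min_rpow_le_mul_truncDual_sub (hα.trans_le hx) hc _
  have hnonneg : ∀ᵐ x ∂μ, 0 ≤ 1 / p x * min |flim x| c ^ p x := hαp.mono fun x hx =>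
    mul_nonneg (one_div_nonneg.2 (by linarith)) (rpow_nonneg (le_min (abs_nonneg _) hc) _)
  calc ∫⁻ x, ENNReal.ofReal (1 / p x * min |flim x| c ^ p x) ∂μ
      ≤ ∫⁻ x, ENNReal.ofReal
          (flim x * g x - 1 / (p x).conjExponent * |g x| ^ (p x).conjExponent) ∂μ :=
        lintegral_mono_ae (hyoung_eq.mono fun x hx => ENNReal.ofReal_le_ofReal hx)
    _ = ENNReal.ofReal ((∫ x, flim x * g x ∂μ) -
          ∫ x, 1 / (p x).conjExponent * |g x| ^ (p x).conjExponent ∂μ) := by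
        rw [← integral_sub hflimg hV]
        exact (ofReal_integral_eq_lintegral_ofReal (hflimg.sub hV)
          ((hnonneg.and hyoung_eq).mono fun x hx => hx.1.trans hx.2)).symm
    _ ≤ _ := htendsto.liminf_eq ▸ liminf_le_liminf (.of_forall hyoung)

theorem lintegral_modular_le_liminf_of_tendsto (hα : 1 < α)
    (hpk : ∀ k, AEMeasurable (pk k) μ) (hbnd : ∀ k, ∀ᵐ x ∂μ, α ≤ pk k x ∧ pk k x ≤ β)
    (hlim : ∀ᵐ x ∂μ, Tendsto (fun k => pk k x) atTop (𝓝 (p x)))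
    (hf : ∀ k, Integrable (f k) μ) (hflim : Integrable flim μ)
    (hweak : ∀ g : X → ℝ, MemLp g ∞ μ →
      Tendsto (fun k => ∫ x, f k x * g x ∂μ) atTop (𝓝 (∫ x, flim x * g x ∂μ))) :
    ∫⁻ x, ENNReal.ofReal (1 / p x * |flim x| ^ p x) ∂μ ≤
      atTop.liminf fun k => ∫⁻ x, ENNReal.ofReal (1 / pk k x * |f k x| ^ pk k x) ∂μ := by
  have hp : AEMeasurable p μ := aemeasurable_of_tendsto_metrizable_ae' hpk hlim
  have hp_bnd : ∀ᵐ x ∂μ, α ≤ p x ∧ p x ≤ β := by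
    rw [← ae_all_iff] at hbnd
    filter_upwards [hlim, hbnd] with x hx hb
    exact ⟨ge_of_tendsto' hx fun k => (hb k).1, le_of_tendsto' hx fun k => (hb k).2⟩
  refine le_of_tendsto' (tendsto_lintegral_truncated_modular hp hflim.aemeasurable
    (hp_bnd.mono fun x hx => by linarith [hx.1])) fun n => ?_
  exact lintegral_truncated_modular_le_liminf hα n.cast_nonneg hpk hp
    (fun k => (hbnd k).mono fun x hx => hx.1) hp_bnd hlim hf hflim hweak

end Modular

theorem statement17_general {N : ℕ}
    (Ω : Set (EuclideanSpace ℝ (Fin N))) (hΩ_open : IsOpen Ω)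
    (hΩ_bdd : Bornology.IsBounded Ω)
    (δ : ℝ) (hδ : δ ∈ Ioc (0 : ℝ) 1)
    (pk : ℕ → EuclideanSpace ℝ (Fin N) → ℝ) (p : EuclideanSpace ℝ (Fin N) → ℝ)
    (α β : ℝ) (hα : 1 < α)
    (hpk_hold : ∀ k, ∃ C : ℝ, ∀ x ∈ closure Ω, ∀ y ∈ closure Ω,
      |pk k x - pk k y| ≤ C * ‖x - y‖ ^ δ)
    (hunif : TendstoUniformlyOn pk p atTop (closure Ω))
    (hbnd : ∀ k, ∀ x ∈ Ω, α ≤ pk k x ∧ pk k x ≤ β)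
    (f : ℕ → EuclideanSpace ℝ (Fin N) → ℝ) (flim : EuclideanSpace ℝ (Fin N) → ℝ)
    (hfk : ∀ k, MemLp (f k) (ENNReal.ofReal α) (volume.restrict Ω))
    (hflim : MemLp flim (ENNReal.ofReal α) (volume.restrict Ω))
    (hweak : ∀ g : EuclideanSpace ℝ (Fin N) → ℝ,
      MemLp g (ENNReal.ofReal (α / (α - 1))) (volume.restrict Ω) →
      Tendsto (fun k => ∫ x in Ω, f k x * g x) atTop (𝓝 (∫ x in Ω, flim x * g x))) :
    (∫⁻ x in Ω, ENNReal.ofReal ((1 / p x) * |flim x| ^ p x)) ≤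
      atTop.liminf
        (fun k => ∫⁻ x in Ω, ENNReal.ofReal ((1 / pk k x) * |f k x| ^ pk k x)) := by
  have hΩ : MeasurableSet Ω := hΩ_open.measurableSet
  have : IsFiniteMeasure (volume.restrict Ω) :=
    isFiniteMeasure_restrict.2 hΩ_bdd.measure_lt_top.ne
  have hα1 : 1 ≤ ENNReal.ofReal α := ENNReal.one_le_ofReal.2 hα.le
  have hpk : ∀ k, AEMeasurable (pk k) (volume.restrict Ω) := fun k => by
    obtain ⟨C, hC⟩ := hpk_hold k
    exact ((continuousOn_of_abs_sub_le_mul_norm_rpow hδ.1 hC).mono subset_closure).aemeasurable hΩ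
  exact lintegral_modular_le_liminf_of_tendsto hα hpk
    (fun k => ae_restrict_of_forall_mem hΩ (hbnd k))
    (ae_restrict_of_forall_mem hΩ fun x hx => hunif.tendsto_at (subset_closure hx))
    (fun k => (hfk k).integrable hα1) (hflim.integrable hα1)
    fun g hg => hweak g (hg.mono_exponent le_top)

/-- Weighted lower semicontinuity of the variable-exponent modular (with weight
`1/p_k(x)`) along a sequence of Hölder-continuous exponents converging uniformly,
with respect to weak `L^α` convergence of the functions. -/
theorem statement17 {N : ℕ}
    (Ω : Set (EuclideanSpace ℝ (Fin N))) (hΩ_open : IsOpen Ω)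
    (hΩ_bdd : Bornology.IsBounded Ω)
    (δ : ℝ) (hδ : δ ∈ Ioc (0 : ℝ) 1)
    (pk : ℕ → EuclideanSpace ℝ (Fin N) → ℝ) (p : EuclideanSpace ℝ (Fin N) → ℝ)
    (α β : ℝ) (hα : 1 < α) (hαβ : α ≤ β)
    (hpk_hold : ∀ k, ∃ C : ℝ, ∀ x ∈ closure Ω, ∀ y ∈ closure Ω,
      |pk k x - pk k y| ≤ C * ‖x - y‖ ^ δ)
    (hp_hold : ∃ C : ℝ, ∀ x ∈ closure Ω, ∀ y ∈ closure Ω,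
      |p x - p y| ≤ C * ‖x - y‖ ^ δ)
    (hunif : TendstoUniformlyOn pk p atTop (closure Ω))
    (hbnd : ∀ k, ∀ x ∈ Ω, α ≤ pk k x ∧ pk k x ≤ β)
    (f : ℕ → EuclideanSpace ℝ (Fin N) → ℝ) (flim : EuclideanSpace ℝ (Fin N) → ℝ)
    (hfk : ∀ k, MemLp (f k) (ENNReal.ofReal α) (volume.restrict Ω))
    (hflim : MemLp flim (ENNReal.ofReal α) (volume.restrict Ω))
    (hlimsup : atTop.limsup
      (fun k => ∫⁻ x in Ω, ENNReal.ofReal (|f k x| ^ pk k x)) < ⊤)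
    (hweak : ∀ g : EuclideanSpace ℝ (Fin N) → ℝ,
      MemLp g (ENNReal.ofReal (α / (α - 1))) (volume.restrict Ω) →
      Tendsto (fun k => ∫ x in Ω, f k x * g x) atTop (𝓝 (∫ x in Ω, flim x * g x))) :
    (∫⁻ x in Ω, ENNReal.ofReal ((1 / p x) * |flim x| ^ p x)) ≤
      atTop.liminf
        (fun k => ∫⁻ x in Ω, ENNReal.ofReal ((1 / pk k x) * |f k x| ^ pk k x)) :=
  statement17_general Ω hΩ_open hΩ_bdd δ hδ pk p α β hα hpk_hold hunif hbnd f flim hfk hflim hweak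
end
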